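/- arXiv:2410.17000 — 3 statements merged into one kernel-verified Lean document; each statement's English description precedes it below -/
import Mathlib

section
/- Let a, b < 2^L with length-L binary representations. Then a > b if and only if the 1-encoding set of a and the 0-encoding set of b have a common element, where strings are compared as sequences of bits. -/
/-- The length-`i` prefix (MSB first) of the length-`L` binary representation of `s`. -/
def prefixBits (L s i : ℕ) : List Bool :=
  List.ofFn fun j : Fin i => Nat.testBit s (L - (j.1 + 1))

/-- The 0-encoding set of `s` (as a length-`L` bit string). -/
def zeroEnc (L s : ℕ) : Set (List Bool) :=
  { w | ∃ i ∈ Finset.Icc 1 L, Nat.testBit s (L - i) = false ∧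
      w = prefixBits L s (i - 1) ++ [true] }

/-- The 1-encoding set of `s` (as a length-`L` bit string). -/
def oneEnc (L s : ℕ) : Set (List Bool) :=
  { w | ∃ i ∈ Finset.Icc 1 L, Nat.testBit s (L - i) = true ∧ w = prefixBits L s i }

lemma prefixBits_succ (L s i : ℕ) :
    prefixBits L s (i + 1) = prefixBits L s i ++ [Nat.testBit s (L - (i + 1))] := by
  rw [prefixBits, List.ofFn_succ']
  simp [prefixBits, List.concat_eq_append, Fin.last]

lemma prefixBits_eq_iff {L a b n : ℕ} :
    prefixBits L a n = prefixBits L b n ↔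
      ∀ j < n, Nat.testBit a (L - (j + 1)) = Nat.testBit b (L - (j + 1))  := by
  rw [prefixBits, prefixBits, List.ofFn_inj, funext_iff]
  constructor
  · intro h j hj; exact h ⟨j, hj⟩
  · intro h j; exact h j.1 j.2

/-- `a > b` iff the 1-encoding set of `a` and the 0-encoding set of `b` intersect. -/
theorem stmt2 (L a b : ℕ) (ha : a < 2 ^ L) (hb : b < 2 ^ L) :
    a > b ↔ (oneEnc L a ∩ zeroEnc L b).Nonempty := by
  constructor
  · intro hab
    -- find the highest differing bit
    have hne : a ≠ b := Nat.ne_of_gt hab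
    set D : Finset ℕ := (Finset.range L).filter (fun k => Nat.testBit a k ≠ Nat.testBit b k)
      with hD
    have hDne : D.Nonempty := by
      by_contra hc
      rw [Finset.not_nonempty_iff_eq_empty] at hc
      apply hne
      apply Nat.eq_of_testBit_eq
      intro k
      by_cases hk : k < L
      · by_contra hne'
        have : k ∈ D := by simp [hD, hk, hne']
        simp [hc] at this
      · rw [Nat.testBit_lt_two_pow (lt_of_lt_of_le ha (Nat.pow_le_pow_right (by norm_num) (le_of_not_gt hk))),
          Nat.testBit_lt_two_pow (lt_of_lt_of_le hb (Nat.pow_le_pow_right (by norm_num) (le_of_not_gt hk)))]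
    set k := D.max' hDne with hk
    have hkD : k ∈ D := D.max'_mem hDne
    have hkL : k < L := (Finset.mem_filter.mp hkD).1 |> Finset.mem_range.mp
    have hkne : Nat.testBit a k ≠ Nat.testBit b k := (Finset.mem_filter.mp hkD).2
    have hagree : ∀ m, k < m → Nat.testBit a m = Nat.testBit b m := by
      intro m hm
      by_contra hne'
      by_cases hmL : m < L
      · have : m ∈ D := by simp [hD, hmL, hne']
        exact absurd (D.le_max' m this) (not_le.mpr hm)
      · apply hne'
        rw [Nat.testBit_lt_two_pow (lt_of_lt_of_le ha (Nat.pow_le_pow_right (by norm_num) (le_of_not_gt hmL))),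
          Nat.testBit_lt_two_pow (lt_of_lt_of_le hb (Nat.pow_le_pow_right (by norm_num) (le_of_not_gt hmL)))]
    have hak : Nat.testBit a k = true := by
      by_contra h
      rw [Bool.not_eq_true] at h
      have hbk : Nat.testBit b k = true := by
        cases hbk : Nat.testBit b k
        · exact absurd (h.trans hbk.symm) hkne
        · rfl
      exact absurd (Nat.lt_of_testBit k h hbk hagree) (not_lt.mpr (le_of_lt hab))
    have hbk : Nat.testBit b k = false := by
      cases hbk : Nat.testBit b k
      · rfl
      · exact absurd (hak.trans hbk.symm) hkne
    refine ⟨prefixBits L a (L - k), ⟨L - k, ?_, ?_, rfl⟩, ⟨L - k, ?_, ?_, ?_⟩⟩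
    · simp [Finset.mem_Icc]; omega
    · rwa [Nat.sub_sub_self (le_of_lt hkL)]
    · simp [Finset.mem_Icc]; omega
    · rwa [Nat.sub_sub_self (le_of_lt hkL)]
    · have h1 : L - k = (L - k - 1) + 1 := by omega
      rw [h1, prefixBits_succ]
      have h2 : L - ((L - k - 1) + 1) = k := by omega
      rw [h2, hak]
      congr 1
      rw [Nat.add_sub_cancel]
      rw [prefixBits_eq_iff]
      intro j hj
      apply hagree
      omega
  · rintro ⟨w, ⟨i, hi, hai, rfl⟩, ⟨i', hi', hbi', hw⟩⟩
    simp only [Finset.mem_Icc] at hi hi'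
    have hlen : i = i' := by
      have := congrArg List.length hw
      simp [prefixBits] at this
      omega
    subst hlen
    have h1 : i = (i - 1) + 1 := by omega
    rw [h1, prefixBits_succ, ← List.concat_eq_append, ← List.concat_eq_append,
      List.concat_inj] at hw
    obtain ⟨hpre, hbit⟩ := hw
    rw [Nat.add_sub_cancel] at hpre
    rw [← h1] at hbit
    rw [prefixBits_eq_iff] at hpre
    refine Nat.lt_of_testBit (L - i) hbi' (hbit ▸ hai) ?_
    intro m hm
    by_cases hmL : m < L
    · have := (hpre (L - m - 1) (by omega)).symm
      have hLm : L - (L - m - 1 + 1) = m := by omega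
      rwa [hLm] at this
    · rw [Nat.testBit_lt_two_pow (lt_of_lt_of_le hb (Nat.pow_le_pow_right (by norm_num) (le_of_not_gt hmL))),
        Nat.testBit_lt_two_pow (lt_of_lt_of_le ha (Nat.pow_le_pow_right (by norm_num) (le_of_not_gt hmL)))]
end

section
/- Let a, b < 2^L with length-L binary representations. Interpret each bit string of length i as the natural number it encodes. Define the partition vector v_a where (v_a)_i is the number encoded by the prefix a_1...a_i, and define the 0-coded vector v_b^0 where (v_b^0)_i equals the number encoded by b_1...b_{i-1}1 if b_i = 0, and equals some number whose binary representation has length different from i otherwise. Then a > b if and only if there exists an index i with (v_a)_i = (v_b^0)_i. -/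
lemma div_pow_succ_eq (n k : ℕ) :
    n / 2 ^ k = (n / 2 ^ (k + 1)) * 2 + (n / 2 ^ k) % 2 := by
  have : n / 2 ^ (k + 1) = n / 2 ^ k / 2 := by
    rw [pow_succ, Nat.div_div_eq_div_mul]
  rw [this]
  omega

/-- With the partition vector `(v_a)_i = a / 2^(L-i)` (the number encoded by the
prefix `a_1...a_i`) and a `0`-coded vector `v0` of `b` whose `i`-th entry encodes
`b_1...b_{i-1}1` when `b_i = 0` and is `≥ 2^i` (hence not a length-`i` prefix value)
otherwise, we have `a > b` iff the two vectors agree at some index. -/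
theorem stmt3 (L a b : ℕ) (ha : a < 2 ^ L) (hb : b < 2 ^ L) (v0 : ℕ → ℕ)
    (hv0 : ∀ i ∈ Finset.Icc 1 L,
      (b.testBit (L - i) = false → v0 i = (b / 2 ^ (L - i + 1)) * 2 + 1) ∧
      (b.testBit (L - i) = true → 2 ^ i ≤ v0 i)) :
    a > b ↔ ∃ i ∈ Finset.Icc 1 L, a / 2 ^ (L - i) = v0 i := by
  constructor
  · intro hab
    -- S : set of differing bit positions
    set S := (Finset.range L).filter (fun j => a.testBit j ≠ b.testBit j) with hS
    have hSne : S.Nonempty := by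
      by_contra h
      rw [Finset.not_nonempty_iff_eq_empty] at h
      have : a = b := by
        apply Nat.eq_of_testBit_eq
        intro j
        by_cases hj : j < L
        · by_contra hne
          have : j ∈ S := by simp [hS, hj, hne]
          simp [h] at this
        · have h1 : a.testBit j = false :=
            Nat.testBit_eq_false_of_lt (lt_of_lt_of_le ha (Nat.pow_le_pow_right (by norm_num) (by omega)))
          have h2 : b.testBit j = false :=
            Nat.testBit_eq_false_of_lt (lt_of_lt_of_le hb (Nat.pow_le_pow_right (by norm_num) (by omega)))
          rw [h1, h2]
      omega
    set k := S.max' hSne with hk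
    have hkS : k ∈ S := S.max'_mem hSne
    have hkL : k < L := by
      have := (Finset.mem_filter.mp hkS).1
      simpa using this
    have hdiff : a.testBit k ≠ b.testBit k := (Finset.mem_filter.mp hkS).2
    have hhigh : ∀ j, k < j → a.testBit j = b.testBit j := by
      intro j hj
      by_cases hjL : j < L
      · by_contra hne
        have hjS : j ∈ S := by simp [hS, hjL, hne]
        exact absurd (S.le_max' j hjS) (by omega)
      · have h1 : a.testBit j = false :=
          Nat.testBit_eq_false_of_lt (lt_of_lt_of_le ha (Nat.pow_le_pow_right (by norm_num) (by omega)))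
        have h2 : b.testBit j = false :=
          Nat.testBit_eq_false_of_lt (lt_of_lt_of_le hb (Nat.pow_le_pow_right (by norm_num) (by omega)))
        rw [h1, h2]
    have hak : a.testBit k = true := by
      by_contra h
      rw [Bool.not_eq_true] at h
      have hbk : b.testBit k = true := by
        cases hb' : b.testBit k
        · exact absurd (h.trans hb'.symm) hdiff
        · rfl
      have := Nat.lt_of_testBit k h hbk hhigh
      omega
    have hbk : b.testBit k = false := by
      cases hb' : b.testBit k
      · rfl
      · exact absurd (hak.trans hb'.symm) hdiff
    -- high parts equal
    have hdivs : a / 2 ^ (k + 1) = b / 2 ^ (k + 1) := by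
      have : a >>> (k+1) = b >>> (k+1) := by
        apply Nat.eq_of_testBit_eq
        intro j
        rw [Nat.testBit_shiftRight, Nat.testBit_shiftRight]
        exact hhigh (k + 1 + j) (by omega)
      simpa [Nat.shiftRight_eq_div_pow] using this
    refine ⟨L - k, by simp; omega, ?_⟩
    have hLk : L - (L - k) = k := by omega
    have hv := (hv0 (L - k) (by simp; omega)).1
    rw [hLk] at hv ⊢
    rw [hv hbk, ← hdivs]
    have := div_pow_succ_eq a k
    have hm : a / 2 ^ k % 2 = 1 := by
      rw [Nat.testBit_eq_decide_div_mod_eq] at hak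
      simpa using hak
    omega
  · rintro ⟨i, hi, hvi⟩
    simp only [Finset.mem_Icc] at hi
    set k := L - i with hk
    have hki : i = L - k := by omega
    cases hbk : b.testBit k with
    | true =>
      have h2 := (hv0 i (by simp; omega)).2 (by rwa [← hk])
      have : a / 2 ^ k < 2 ^ i := by
        apply Nat.div_lt_of_lt_mul
        calc a < 2 ^ L := ha
        _ = 2 ^ k * 2 ^ i := by rw [← pow_add]; congr 1; omega
      omega
    | false =>
      have h1 := (hv0 i (by simp; omega)).1 (by rwa [← hk])
      rw [← hk] at h1
      rw [h1] at hvi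
      have hbb := div_pow_succ_eq b k
      have hmb : b / 2 ^ k % 2 = 0 := by
        rw [Nat.testBit_eq_decide_div_mod_eq] at hbk
        simp at hbk
        omega
      have hdivlt : b / 2 ^ k < a / 2 ^ k := by omega
      have hdm := Nat.div_add_mod b (2 ^ k)
      have hmlt : b % 2 ^ k < 2 ^ k := Nat.mod_lt _ (by positivity)
      have : b < (b / 2 ^ k + 1) * 2 ^ k := by nlinarith
      have h2 : (b / 2 ^ k + 1) * 2 ^ k ≤ (a / 2 ^ k) * 2 ^ k :=
        Nat.mul_le_mul_right _ (by omega)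
      have h3 : (a / 2 ^ k) * 2 ^ k ≤ a := Nat.div_mul_le_self a _
      omega
end

section
/- Let F be a finite field, T ≥ 1, s ∈ F, and α_1, ..., α_T distinct nonzero points in F. If the coefficients r_1, ..., r_T are chosen independently and uniformly at random in F and p(x) = s + r_1 x + ... + r_T x^T, then the joint distribution of (p(α_1), ..., p(α_T)) is uniform on F^T, and in particular is independent of the secret s. -/
/-!
The share map `r ↦ (s + ∑ⱼ rⱼ αᵢ^(j+1))ᵢ` is an affine self-map of the finite set `F^T`. It is
injective: equal shares give `αᵢ · ∑ⱼ (rⱼ - r'ⱼ) αᵢ^j = 0`, and after cancelling `αᵢ ≠ 0` the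
Vandermonde matrix of the distinct points `αᵢ` forces `r = r'`. Hence it is a bijection, and a
bijection pushes the uniform distribution forward to the uniform distribution.
-/

theorem PMF.map_uniformOfFintype_of_bijective {α β : Type*} [Fintype α] [Nonempty α]
    [Fintype β] [Nonempty β] {f : α → β} (hf : Function.Bijective f) :
    (uniformOfFintype α).map f = uniformOfFintype β := by
  ext b
  obtain ⟨a, rfl⟩ := hf.surjective b
  rw [map_apply, tsum_eq_single a fun a' ha' => if_neg (hf.injective.ne ha').symm, if_pos rfl,
    uniformOfFintype_apply, uniformOfFintype_apply, Fintype.card_of_bijective hf]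

theorem Matrix.eq_zero_of_forall_index_sum_mul_pow_succ_eq_zero {R : Type*} [CommRing R]
    [IsDomain R] {n : ℕ} {f v : Fin n → R} (hf : Function.Injective f) (hf₀ : ∀ j, f j ≠ 0)
    (hfv : ∀ j, ∑ i, v i * f j ^ ((i : ℕ) + 1) = 0) : v = 0 := by
  refine eq_zero_of_forall_index_sum_mul_pow_eq_zero hf fun j => ?_
  have h := hfv j
  simp_rw [pow_succ, ← mul_assoc, ← Finset.sum_mul] at h
  exact (mul_eq_zero.1 h).resolve_right (hf₀ j)

theorem shamir_shares_injective {R : Type*} [CommRing R] [IsDomain R] {n : ℕ} (s : R)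
    {α : Fin n → R} (hα : Function.Injective α) (hα₀ : ∀ i, α i ≠ 0) :
    Function.Injective fun r : Fin n → R => fun i => s + ∑ j, r j * α i ^ ((j : ℕ) + 1) := by
  intro r r' h
  rw [← sub_eq_zero]
  refine Matrix.eq_zero_of_forall_index_sum_mul_pow_succ_eq_zero hα hα₀ fun i => ?_
  simp_rw [Pi.sub_apply, sub_mul, Finset.sum_sub_distrib, sub_eq_zero]
  exact add_left_cancel (congrFun h i)

theorem stmt10_general (F : Type*) [Field F] [Fintype F] (T : ℕ)
    (s : F) (α : Fin T → F) (hinj : Function.Injective α) (hz : ∀ i, α i ≠ 0) :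
    PMF.map (fun r : Fin T → F => fun i : Fin T => s + ∑ j : Fin T, r j * α i ^ ((j : ℕ) + 1))
        (PMF.uniformOfFintype (Fin T → F)) =
      PMF.uniformOfFintype (Fin T → F) :=
  PMF.map_uniformOfFintype_of_bijective <|
    Finite.injective_iff_bijective.1 <| shamir_shares_injective s hinj hz

/-- Perfect privacy of Shamir secret sharing: if the coefficients `r₁, ..., r_T` are
uniform and independent in a finite field `F` and `p(x) = s + r₁ x + ... + r_T x^T`,
then the `T` shares `(p(α₁), ..., p(α_T))` at distinct nonzero points are jointly
uniform on `F^T`, independently of the secret `s`. -/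
theorem stmt10 (F : Type*) [Field F] [Fintype F] [DecidableEq F] (T : ℕ) (hT : 1 ≤ T)
    (s : F) (α : Fin T → F) (hinj : Function.Injective α) (hz : ∀ i, α i ≠ 0) :
    PMF.map (fun r : Fin T → F => fun i : Fin T => s + ∑ j : Fin T, r j * α i ^ ((j : ℕ) + 1))
        (PMF.uniformOfFintype (Fin T → F)) =
      PMF.uniformOfFintype (Fin T → F) :=
  stmt10_general F T s α hinj hz
end
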